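/- arXiv:1908.02725 — 5 statements merged into one kernel-verified Lean document; each statement's English description precedes it below -/
import Mathlib

section
/- Under the expected smoothness inequality E[‖∇f_v(x) − ∇f_v(x*)‖²] ≤ 2𝓛(f(x)−f(x*)), μ-strong convexity of f, unbiasedness E[∇f_v(x)] = ∇f(x), the expected residual can be taken as ρ = 𝓛 − μ: for all x, E[‖∇f_v(x) − ∇f_v(x*) − ∇f(x)‖²] ≤ 2(𝓛 − μ)(f(x) − f(x*)). -/
/-! Writing `Y = ∇f_v(x) − ∇f_v(x*)`, unbiasedness and `∇f(x*) = 0` give `E[Y] = ∇f(x)`, so the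
bias–variance identity reads `E‖Y − ∇f(x)‖² = E‖Y‖² − ‖∇f(x)‖²`. Expected smoothness bounds the
first term by `2𝓛(f(x) − f(x*))` and the PL inequality bounds `‖∇f(x)‖²` below by
`2μ(f(x) − f(x*))`. -/

open MeasureTheory
open scoped InnerProductSpace

section

variable {Ω E : Type*} [MeasurableSpace Ω] {P : Measure Ω}
  [NormedAddCommGroup E] [InnerProductSpace ℝ E]

theorem integral_norm_sub_sq [CompleteSpace E] [IsProbabilityMeasure P] {Y : Ω → E}
    (hY : Integrable Y P) (hY2 : Integrable (fun ω => ‖Y ω‖ ^ 2) P) (c : E) :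
    ∫ ω, ‖Y ω - c‖ ^ 2 ∂P = ∫ ω, ‖Y ω‖ ^ 2 ∂P - 2 * ⟪c, ∫ ω, Y ω ∂P⟫_ℝ + ‖c‖ ^ 2 := by
  have hinner : Integrable (fun ω => 2 * ⟪c, Y ω⟫_ℝ) P := (hY.const_inner c).const_mul 2
  calc ∫ ω, ‖Y ω - c‖ ^ 2 ∂P
      = ∫ ω, (‖Y ω‖ ^ 2 - 2 * ⟪c, Y ω⟫_ℝ + ‖c‖ ^ 2) ∂P := by
        simp_rw [norm_sub_sq_real, real_inner_comm]
    _ = ∫ ω, ‖Y ω‖ ^ 2 ∂P - 2 * ⟪c, ∫ ω, Y ω ∂P⟫_ℝ + ‖c‖ ^ 2 := by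
        rw [integral_add (hY2.sub' hinner) (integrable_const _), integral_sub hY2 hinner,
          integral_const_mul, integral_inner hY, integral_const, probReal_univ, one_smul]

/-- If `B` is not integrable then neither is `A`, and both sides vanish because `∫ A = 0`. -/
theorem real_inner_integral_integral_sub_of_integral_eq_zero {A B : Ω → E}
    (hAB : Integrable (fun ω => A ω - B ω) P) (hB : ∫ ω, B ω ∂P = 0) :
    ⟪∫ ω, A ω ∂P, ∫ ω, A ω - B ω ∂P⟫_ℝ = ‖∫ ω, A ω ∂P‖ ^ 2 := by
  by_cases hBint : Integrable B P
  · have hAint : Integrable A P :=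
      (hAB.add hBint).congr (.of_forall fun ω => sub_add_cancel (A ω) (B ω))
    rw [integral_sub hAint hBint, hB, sub_zero, real_inner_self_eq_norm_sq]
  · have hAint : ¬ Integrable A P := fun hA =>
      hBint ((hA.sub hAB).congr (.of_forall fun ω => sub_sub_cancel (A ω) (B ω)))
    simp [integral_undef hAint]

end

theorem expected_residual_bound_general {Ω : Type*} [MeasureSpace Ω]
    [IsProbabilityMeasure (volume : Measure Ω)] (d : ℕ)
    (f : EuclideanSpace ℝ (Fin d) → ℝ)
    (g : EuclideanSpace ℝ (Fin d) → EuclideanSpace ℝ (Fin d))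
    (gv : Ω → EuclideanSpace ℝ (Fin d) → EuclideanSpace ℝ (Fin d))
    (μ L : ℝ) (hμ : 0 < μ)
    (xs : EuclideanSpace ℝ (Fin d)) (hgrad0 : g xs = 0)
    (hPL : ∀ x, 1 / (2 * μ) * ‖g x‖ ^ 2 ≥ f x - f xs)
    (hunb : ∀ x, (∫ ω, gv ω x) = g x)
    (hint1 : ∀ x, Integrable (fun ω => gv ω x - gv ω xs))
    (hint2 : ∀ x, Integrable (fun ω => ‖gv ω x - gv ω xs‖ ^ 2))
    (hES : ∀ x, (∫ ω, ‖gv ω x - gv ω xs‖ ^ 2) ≤ 2 * L * (f x - f xs)) :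
    ∀ x, (∫ ω, ‖gv ω x - gv ω xs - g x‖ ^ 2) ≤ 2 * (L - μ) * (f x - f xs) := by
  intro x
  have hmean : ⟪g x, ∫ ω, gv ω x - gv ω xs⟫_ℝ = ‖g x‖ ^ 2 := by
    simpa only [hunb] using
      real_inner_integral_integral_sub_of_integral_eq_zero (hint1 x) (by rw [hunb, hgrad0])
  have hgrad_sq : 2 * μ * (f x - f xs) ≤ ‖g x‖ ^ 2 := by
    have h := hPL x
    rw [ge_iff_le, one_div, inv_mul_eq_div, le_div_iff₀ (by positivity)] at h
    linarith
  rw [integral_norm_sub_sq (hint1 x) (hint2 x), hmean]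
  linarith [hES x]

theorem expected_residual_bound {Ω : Type*} [MeasureSpace Ω]
    [IsProbabilityMeasure (volume : Measure Ω)] (d : ℕ)
    (f : EuclideanSpace ℝ (Fin d) → ℝ)
    (g : EuclideanSpace ℝ (Fin d) → EuclideanSpace ℝ (Fin d))
    (gv : Ω → EuclideanSpace ℝ (Fin d) → EuclideanSpace ℝ (Fin d))
    (μ L : ℝ) (hμ : 0 < μ) (hL : 0 ≤ L)
    (xs : EuclideanSpace ℝ (Fin d)) (hmin : ∀ y, f xs ≤ f y) (hgrad0 : g xs = 0)
    (hsc : ∀ x y, f x ≤ f y + ⟪g x, x - y⟫_ℝ - μ / 2 * ‖x - y‖ ^ 2)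
    (hPL : ∀ x, 1 / (2 * μ) * ‖g x‖ ^ 2 ≥ f x - f xs)
    (hunb : ∀ x, (∫ ω, gv ω x) = g x)
    (hint1 : ∀ x, Integrable (fun ω => gv ω x - gv ω xs))
    (hint2 : ∀ x, Integrable (fun ω => ‖gv ω x - gv ω xs‖ ^ 2))
    (hES : ∀ x, (∫ ω, ‖gv ω x - gv ω xs‖ ^ 2) ≤ 2 * L * (f x - f xs)) :
    ∀ x, (∫ ω, ‖gv ω x - gv ω xs - g x‖ ^ 2) ≤ 2 * (L - μ) * (f x - f xs) :=
  expected_residual_bound_general d f g gv μ L hμ xs hgrad0 hPL hunb hint1 hint2 hES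
end

section
/- Let g(x,w) = ∇f_v(x) − ∇f_v(w) + ∇f(w). If the expected smoothness inequality E[‖∇f_v(x)−∇f_v(x*)‖²] ≤ 2𝓛(f(x)−f(x*)) and expected residual inequality E[‖∇f_v(w)−∇f_v(x*)−∇f(w)‖²] ≤ 2ρ(f(w)−f(x*)) hold, then E[‖g(x,w)‖²] ≤ 4𝓛(f(x)−f(x*)) + 4ρ(f(w)−f(x*)). -/
open MeasureTheory

theorem norm_sub_sq_le_two_mul_add {E : Type*} [SeminormedAddCommGroup E] (a b : E) :
    ‖a - b‖ ^ 2 ≤ 2 * (‖a‖ ^ 2 + ‖b‖ ^ 2) :=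
  (pow_le_pow_left₀ (norm_nonneg _) (norm_sub_le a b) 2).trans add_sq_le

theorem integral_norm_sub_sq_le {α E : Type*} [MeasurableSpace α] {μ : Measure α}
    [NormedAddCommGroup E] {X Y : α → E}
    (hX : Integrable (fun a => ‖X a‖ ^ 2) μ) (hY : Integrable (fun a => ‖Y a‖ ^ 2) μ) :
    ∫ a, ‖X a - Y a‖ ^ 2 ∂μ ≤ 2 * (∫ a, ‖X a‖ ^ 2 ∂μ + ∫ a, ‖Y a‖ ^ 2 ∂μ) :=
  calc ∫ a, ‖X a - Y a‖ ^ 2 ∂μ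
      ≤ ∫ a, 2 * (‖X a‖ ^ 2 + ‖Y a‖ ^ 2) ∂μ :=
        integral_mono_of_nonneg (.of_forall fun _ => by positivity) ((hX.add hY).const_mul 2)
          (.of_forall fun a => norm_sub_sq_le_two_mul_add (X a) (Y a))
    _ = 2 * (∫ a, ‖X a‖ ^ 2 ∂μ + ∫ a, ‖Y a‖ ^ 2 ∂μ) := by
        rw [integral_const_mul, integral_add hX hY]

theorem variance_reduced_gradient_bound_general {Ω : Type*} [MeasureSpace Ω]
    (d : ℕ)
    (f : EuclideanSpace ℝ (Fin d) → ℝ)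
    (G : EuclideanSpace ℝ (Fin d) → EuclideanSpace ℝ (Fin d))
    (gv : Ω → EuclideanSpace ℝ (Fin d) → EuclideanSpace ℝ (Fin d))
    (L ρ : ℝ)
    (xs : EuclideanSpace ℝ (Fin d))
    (hint1 : ∀ x, Integrable (fun ω => ‖gv ω x - gv ω xs‖ ^ 2))
    (hint2 : ∀ w, Integrable (fun ω => ‖gv ω w - gv ω xs - G w‖ ^ 2))
    (hES : ∀ x, (∫ ω, ‖gv ω x - gv ω xs‖ ^ 2) ≤ 2 * L * (f x - f xs))
    (hER : ∀ w, (∫ ω, ‖gv ω w - gv ω xs - G w‖ ^ 2) ≤ 2 * ρ * (f w - f xs)) :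
    ∀ x w, (∫ ω, ‖gv ω x - gv ω w + G w‖ ^ 2)
      ≤ 4 * L * (f x - f xs) + 4 * ρ * (f w - f xs) := by
  intro x w
  have hsplit : ∀ ω, gv ω x - gv ω w + G w = (gv ω x - gv ω xs) - (gv ω w - gv ω xs - G w) :=
    fun ω => by abel
  simp only [hsplit]
  linarith [integral_norm_sub_sq_le (hint1 x) (hint2 w), hES x, hER w]

theorem variance_reduced_gradient_bound {Ω : Type*} [MeasureSpace Ω]
    [IsProbabilityMeasure (volume : Measure Ω)] (d : ℕ)
    (f : EuclideanSpace ℝ (Fin d) → ℝ)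
    (G : EuclideanSpace ℝ (Fin d) → EuclideanSpace ℝ (Fin d))
    (gv : Ω → EuclideanSpace ℝ (Fin d) → EuclideanSpace ℝ (Fin d))
    (L ρ : ℝ) (hL : 0 ≤ L) (hρ : 0 ≤ ρ)
    (xs : EuclideanSpace ℝ (Fin d)) (hmin : ∀ y, f xs ≤ f y) (hgrad0 : G xs = 0)
    (hint1 : ∀ x, Integrable (fun ω => ‖gv ω x - gv ω xs‖ ^ 2))
    (hint2 : ∀ w, Integrable (fun ω => ‖gv ω w - gv ω xs - G w‖ ^ 2))
    (hES : ∀ x, (∫ ω, ‖gv ω x - gv ω xs‖ ^ 2) ≤ 2 * L * (f x - f xs))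
    (hER : ∀ w, (∫ ω, ‖gv ω w - gv ω xs - G w‖ ^ 2) ≤ 2 * ρ * (f w - f xs)) :
    ∀ x w, (∫ ω, ‖gv ω x - gv ω w + G w‖ ^ 2)
      ≤ 4 * L * (f x - f xs) + 4 * ρ * (f w - f xs) :=
  variance_reduced_gradient_bound_general d f G gv L ρ xs hint1 hint2 hES hER
end

section
/- Let v be a sampling vector with v_i ≥ 0 a.s. and E[v]=𝟙, each f_i convex and L_i-smooth, L_max = max_i L_i. Then for all w, E[‖∇f_v(w) − ∇f_v(x*) − (∇f(w) − ∇f(x*))‖²] ≤ 2·(λ_max(Var(v))/n)·L_max·(f(w) − f(x*)), where Var(v) = E[(v−𝟙)(v−𝟙)ᵀ]. -/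
/-!
With `a i = ∇fᵢ(w) - ∇fᵢ(x*)`, the residual is `n⁻¹ • ∑ i, (vᵢ - 1) • a i`, so its second moment
is `n⁻² ∑ i j, Var(v)ᵢⱼ ⟪a i, a j⟫`. Since `λ_max • 1 - Var(v)` is positive semidefinite, its
Schur product with the Gram matrix of the `a i` shows that this is at most
`n⁻² λ_max ∑ i, ‖a i‖²`. Co-coercivity of convex `Lᵢ`-smooth functions bounds `‖a i‖²` by
`2 Lᵢ` times the Bregman divergence of `fᵢ` between `w` and `x*`, and these divergences sum to
`n (f w - f x*)` because the gradients `∇fᵢ(x*)` sum to zero at the minimizer.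

The covariance entries are honest integrals only when the weights are square integrable. Because
the weights are nonnegative and `⟪a i, w - x*⟫ > 0` whenever `a i ≠ 0`, square integrability of
the residual already forces it for every weight that matters.
-/

open MeasureTheory
open scoped InnerProductSpace

section ConvexSmooth

variable {E : Type*} [NormedAddCommGroup E] [InnerProductSpace ℝ E]
  {f : E → ℝ} {g : E → E} {L : ℝ}

theorem smoothness_constant_nonneg [Nontrivial E]
    (hconv : ∀ x y, f y ≥ f x + ⟪g x, y - x⟫_ℝ)
    (hsmooth : ∀ x y, f x ≤ f y + ⟪g y, x - y⟫_ℝ + L / 2 * ‖x - y‖ ^ 2) : 0 ≤ L := by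
  obtain ⟨z, hz⟩ := exists_ne (0 : E)
  have h1 := hconv 0 z
  have h2 := hsmooth z 0
  simp only [sub_zero] at h1 h2
  have : 0 < ‖z‖ ^ 2 := by positivity
  nlinarith

theorem sq_norm_sub_le_two_mul_bregman
    (hconv : ∀ x y, f y ≥ f x + ⟪g x, y - x⟫_ℝ)
    (hsmooth : ∀ x y, f x ≤ f y + ⟪g y, x - y⟫_ℝ + L / 2 * ‖x - y‖ ^ 2) (hL : 0 ≤ L) (x y : E) :
    ‖g x - g y‖ ^ 2 ≤ 2 * L * (f x - f y - ⟪g y, x - y⟫_ℝ) := by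
  set a := g x - g y
  set D := f x - f y - ⟪g y, x - y⟫_ℝ
  have descent : ∀ t : ℝ, t * ‖a‖ ^ 2 ≤ D + L / 2 * t ^ 2 * ‖a‖ ^ 2 := by
    intro t
    have h1 := hconv y (x - t • a)
    have h2 := hsmooth (x - t • a) x
    rw [sub_right_comm, inner_sub_right, real_inner_smul_right] at h1
    rw [sub_sub_cancel_left, inner_neg_right, real_inner_smul_right, norm_neg, norm_smul, mul_pow,
      Real.norm_eq_abs, sq_abs] at h2
    have ha : ⟪g x, a⟫_ℝ - ⟪g y, a⟫_ℝ = ‖a‖ ^ 2 := by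
      rw [← inner_sub_left, real_inner_self_eq_norm_sq]
    linear_combination h1 + h2 - t * ha
  rcases hL.eq_or_lt with rfl | hL
  · by_contra! h
    rw [mul_zero, zero_mul] at h
    have := descent ((D + 1) / ‖a‖ ^ 2)
    rw [div_mul_cancel₀ _ h.ne'] at this
    linarith
  · have := descent L⁻¹
    field_simp at this
    nlinarith

theorem sq_norm_sub_le_mul_inner
    (hconv : ∀ x y, f y ≥ f x + ⟪g x, y - x⟫_ℝ)
    (hsmooth : ∀ x y, f x ≤ f y + ⟪g y, x - y⟫_ℝ + L / 2 * ‖x - y‖ ^ 2) (hL : 0 ≤ L) (x y : E) :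
    ‖g x - g y‖ ^ 2 ≤ L * ⟪g x - g y, x - y⟫_ℝ := by
  have hxy := sq_norm_sub_le_two_mul_bregman hconv hsmooth hL x y
  have hyx := sq_norm_sub_le_two_mul_bregman hconv hsmooth hL y x
  rw [norm_sub_rev] at hyx
  have : ⟪g x - g y, x - y⟫_ℝ = -⟪g y, x - y⟫_ℝ - ⟪g x, y - x⟫_ℝ := by
    rw [inner_sub_left, ← neg_sub x y, inner_neg_right]; ring
  rw [this]
  linear_combination (hxy + hyx) / 2

theorem sub_eq_zero_or_inner_pos
    (hconv : ∀ x y, f y ≥ f x + ⟪g x, y - x⟫_ℝ)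
    (hsmooth : ∀ x y, f x ≤ f y + ⟪g y, x - y⟫_ℝ + L / 2 * ‖x - y‖ ^ 2) (hL : 0 ≤ L) (x y : E) :
    g x - g y = 0 ∨ 0 < ⟪g x - g y, x - y⟫_ℝ := by
  by_contra! h
  have := sq_norm_sub_le_mul_inner hconv hsmooth hL x y
  have : 0 < ‖g x - g y‖ ^ 2 := pow_pos (norm_pos_iff.2 h.1) 2
  nlinarith [h.2]

theorem eq_zero_of_forall_le_of_quadratic_upper_bound {F : E → ℝ} {x G : E} {K : ℝ}
    (hsmooth : ∀ y, F y ≤ F x + ⟪G, y - x⟫_ℝ + K / 2 * ‖y - x‖ ^ 2) (hmin : ∀ y, F x ≤ F y) :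
    G = 0 := by
  set t := (|K| + 1)⁻¹
  have ht : 0 < t := by positivity
  have hKt : K * t < 1 := by
    calc K * t ≤ |K| * t := by gcongr; exact le_abs_self K
      _ < (|K| + 1) * t := by gcongr; linarith
      _ = 1 := mul_inv_cancel₀ (by positivity)
  have h := (hmin (x - t • G)).trans (hsmooth (x - t • G))
  rw [sub_sub_cancel_left, inner_neg_right, real_inner_smul_right, real_inner_self_eq_norm_sq,
    norm_neg, norm_smul, mul_pow, Real.norm_eq_abs, sq_abs] at h
  by_contra hG
  have hG2 : 0 < ‖G‖ ^ 2 := by positivity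
  nlinarith [mul_pos (mul_pos ht hG2) (show 0 < 1 - K * t / 2 by linarith)]

variable {ι : Type*} [Fintype ι] {f : ι → E → ℝ} {g : ι → E → E} {L : ι → ℝ}

theorem sum_eq_zero_of_forall_sum_le
    (hsmooth : ∀ i x y, f i x ≤ f i y + ⟪g i y, x - y⟫_ℝ + L i / 2 * ‖x - y‖ ^ 2) {x : E}
    (hmin : ∀ y, ∑ i, f i x ≤ ∑ i, f i y) : ∑ i, g i x = 0 := by
  refine eq_zero_of_forall_le_of_quadratic_upper_bound (F := fun y => ∑ i, f i y)
    (K := ∑ i, L i) (fun y => ?_) hmin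
  calc ∑ i, f i y ≤ ∑ i, (f i x + ⟪g i x, y - x⟫_ℝ + L i / 2 * ‖y - x‖ ^ 2) :=
        Finset.sum_le_sum fun i _ => hsmooth i y x
    _ = _ := by simp [Finset.sum_add_distrib, sum_inner, Finset.sum_mul, Finset.sum_div]

theorem sum_sq_norm_sub_le_of_sum_eq_zero
    (hconv : ∀ i x y, f i y ≥ f i x + ⟪g i x, y - x⟫_ℝ)
    (hsmooth : ∀ i x y, f i x ≤ f i y + ⟪g i y, x - y⟫_ℝ + L i / 2 * ‖x - y‖ ^ 2)
    (hL : ∀ i, 0 ≤ L i) {Lmax : ℝ} (hLmax : ∀ i, L i ≤ Lmax) {x y : E} (hy : ∑ i, g i y = 0) :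
    ∑ i, ‖g i x - g i y‖ ^ 2 ≤ 2 * Lmax * (∑ i, f i x - ∑ i, f i y) := by
  have hbregman : ∑ i, f i x - ∑ i, f i y = ∑ i, (f i x - f i y - ⟪g i y, x - y⟫_ℝ) := by
    simp [Finset.sum_sub_distrib, ← sum_inner, hy]
  rw [hbregman, Finset.mul_sum]
  refine Finset.sum_le_sum fun i _ => ?_
  calc ‖g i x - g i y‖ ^ 2 ≤ 2 * L i * (f i x - f i y - ⟪g i y, x - y⟫_ℝ) :=
        sq_norm_sub_le_two_mul_bregman (hconv i) (hsmooth i) (hL i) x y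
    _ ≤ 2 * Lmax * (f i x - f i y - ⟪g i y, x - y⟫_ℝ) := by
      gcongr
      · linarith [hconv i y x]
      · exact hLmax i

end ConvexSmooth

namespace Matrix

variable {n E : Type*} [Fintype n] [NormedAddCommGroup E] [InnerProductSpace ℝ E]
  {A : Matrix n n ℝ}

theorem PosSemidef.sum_mul_inner_nonneg (hA : A.PosSemidef) (a : n → E) :
    0 ≤ ∑ i, ∑ j, A i j * ⟪a i, a j⟫_ℝ := by
  simpa [dotProduct, mulVec, Finset.mul_sum] using
    (hA.hadamard (posSemidef_gram ℝ a)).dotProduct_mulVec_nonneg 1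

variable [DecidableEq n]

theorem IsHermitian.posSemidef_iSup_eigenvalues_smul_one_sub (hA : A.IsHermitian) :
    ((⨆ i, hA.eigenvalues i) • 1 - A).PosSemidef := by
  have hspec : A = _ := hA.spectral_theorem
  have hU : IsUnit (hA.eigenvectorUnitary : Matrix n n ℝ) := Unitary.isUnit_coe
  have hUU : (hA.eigenvectorUnitary : Matrix n n ℝ) * star (hA.eigenvectorUnitary : Matrix n n ℝ)
      = 1 := Unitary.coe_mul_star_self _
  simp only [Unitary.conjStarAlgAut_apply, RCLike.ofReal_real_eq_id, Function.id_comp] at hspec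
  generalize (hA.eigenvectorUnitary : Matrix n n ℝ) = U at hU hUU hspec
  generalize hA.eigenvalues = μ at hspec ⊢
  have hdiag : diagonal (fun i => (⨆ j, μ j) - μ i) = (⨆ j, μ j) • 1 - diagonal μ := by
    ext i j
    by_cases h : i = j <;> simp [h]
  have hconj : U * diagonal (fun i => (⨆ j, μ j) - μ i) * star U = (⨆ i, μ i) • 1 - A := by
    rw [hdiag, hspec, mul_sub, sub_mul, Matrix.mul_smul, Matrix.smul_mul, mul_one, hUU]
  rw [← hconj, IsUnit.posSemidef_star_right_conjugate_iff hU, posSemidef_diagonal_iff]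
  exact fun i => sub_nonneg.2 (le_ciSup (Set.finite_range _).bddAbove i)

theorem IsHermitian.apply_le_iSup_eigenvalues (hA : A.IsHermitian) (i : n) :
    A i i ≤ ⨆ j, hA.eigenvalues j := by
  simpa [sub_nonneg] using hA.posSemidef_iSup_eigenvalues_smul_one_sub.diag_nonneg (i := i)

theorem IsHermitian.sum_mul_inner_le (hA : A.IsHermitian) (a : n → E) :
    ∑ i, ∑ j, A i j * ⟪a i, a j⟫_ℝ ≤ (⨆ i, hA.eigenvalues i) * ∑ i, ‖a i‖ ^ 2 := by
  have := hA.posSemidef_iSup_eigenvalues_smul_one_sub.sum_mul_inner_nonneg a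
  rw [Finset.mul_sum]
  simpa [sub_mul, Finset.sum_sub_distrib, one_apply] using this

end Matrix

section Integrals

variable {Ω ι E : Type*} [MeasurableSpace Ω] {μ : Measure Ω} [Fintype ι]
  [NormedAddCommGroup E] [InnerProductSpace ℝ E]

theorem MeasureTheory.MemLp.integrable_inner {f g : Ω → E} (hf : MemLp f 2 μ) (hg : MemLp g 2 μ) :
    Integrable (fun ω => ⟪f ω, g ω⟫_ℝ) μ :=
  (hf.norm.integrable_mul hg.norm).mono' (hf.1.inner hg.1)
    (ae_of_all _ fun _ => norm_inner_le_norm _ _)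

theorem integral_norm_sum_smul_sq (p : Ω → ι → ℝ) (a : ι → E)
    (h : ∀ i, MemLp (fun ω => p ω i • a i) 2 μ) :
    ∫ ω, ‖∑ i, p ω i • a i‖ ^ 2 ∂μ = ∑ i, ∑ j, (∫ ω, p ω i * p ω j ∂μ) * ⟪a i, a j⟫_ℝ := by
  have hexpand : ∀ ω, ‖∑ i, p ω i • a i‖ ^ 2 = ∑ i, ∑ j, ⟪p ω i • a i, p ω j • a j⟫_ℝ := by
    intro ω
    rw [← real_inner_self_eq_norm_sq, sum_inner]
    simp_rw [inner_sum]
  simp_rw [hexpand]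
  rw [integral_finsetSum _ fun i _ => integrable_finsetSum _ fun j _ =>
    (h i).integrable_inner (h j)]
  refine Finset.sum_congr rfl fun i _ => ?_
  rw [integral_finsetSum _ fun j _ => (h i).integrable_inner (h j)]
  refine Finset.sum_congr rfl fun j _ => ?_
  simp_rw [real_inner_smul_left, real_inner_smul_right, ← mul_assoc]
  exact integral_mul_const _ _

theorem memLp_smul_of_memLp_sum_smul {p : ENNReal} {v : Ω → ι → ℝ} {a : ι → E} {u : E}
    (hv0 : ∀ ω i, 0 ≤ v ω i) (hmeas : ∀ i, AEStronglyMeasurable (fun ω => v ω i) μ)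
    (ha : ∀ i, a i = 0 ∨ 0 < ⟪a i, u⟫_ℝ) (hsum : MemLp (fun ω => ∑ i, v ω i • a i) p μ) (i : ι) :
    MemLp (fun ω => v ω i • a i) p μ := by
  obtain hai | hc := ha i
  · simp [hai]
  have hS : MemLp (fun ω => ∑ j, v ω j * ⟪a j, u⟫_ℝ) p μ := by
    simpa [sum_inner, real_inner_smul_left] using hsum.inner_const (𝕜 := ℝ) u
  refine hS.of_le_mul (c := ‖a i‖ / ⟪a i, u⟫_ℝ) ((hmeas i).smul_const (a i))
    (ae_of_all _ fun ω => ?_)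
  have hle : v ω i * ⟪a i, u⟫_ℝ ≤ ∑ j, v ω j * ⟪a j, u⟫_ℝ :=
    Finset.single_le_sum (f := fun j => v ω j * ⟪a j, u⟫_ℝ)
      (fun j _ => mul_nonneg (hv0 ω j) ((ha j).elim (fun h => by simp [h]) le_of_lt))
      (Finset.mem_univ i)
  rw [norm_smul, Real.norm_eq_abs, abs_of_nonneg (hv0 ω i), div_mul_eq_mul_div, le_div_iff₀ hc]
  calc v ω i * ‖a i‖ * ⟪a i, u⟫_ℝ = ‖a i‖ * (v ω i * ⟪a i, u⟫_ℝ) := by ring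
    _ ≤ ‖a i‖ * ‖∑ j, v ω j * ⟪a j, u⟫_ℝ‖ := by
      gcongr
      exact hle.trans (Real.le_norm_self _)

theorem memLp_sub_one_smul_of_memLp_sum [IsFiniteMeasure μ] {p : ENNReal} {v : Ω → ι → ℝ}
    {a : ι → E} {u : E} (hv0 : ∀ ω i, 0 ≤ v ω i)
    (hmeas : ∀ i, AEStronglyMeasurable (fun ω => v ω i) μ) (ha : ∀ i, a i = 0 ∨ 0 < ⟪a i, u⟫_ℝ)
    (hsum : MemLp (fun ω => ∑ i, (v ω i - 1) • a i) p μ) (i : ι) :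
    MemLp (fun ω => (v ω i - 1) • a i) p μ := by
  have hsum' : MemLp (fun ω => ∑ i, v ω i • a i) p μ := by
    convert hsum.add (memLp_const (∑ i, a i)) using 1
    ext ω
    simp [sub_smul, Finset.sum_sub_distrib]
  convert (memLp_smul_of_memLp_sum_smul hv0 hmeas ha hsum' i).sub (memLp_const (a i)) using 1
  ext ω
  simp [sub_smul]

theorem iSup_eigenvalues_nonneg_of_second_moment [Nonempty ι] [DecidableEq ι] {p : Ω → ι → ℝ}
    (hM : (Matrix.of fun i j => ∫ ω, p ω i * p ω j ∂μ).IsHermitian) :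
    0 ≤ ⨆ i, hM.eigenvalues i :=
  (integral_nonneg fun _ => mul_self_nonneg _).trans
    (hM.apply_le_iSup_eigenvalues (Classical.arbitrary ι))

theorem integral_norm_sum_sub_one_smul_sq_le [IsFiniteMeasure μ] [DecidableEq ι] [Nonempty ι]
    {v : Ω → ι → ℝ} {a : ι → E} {u : E} (hv0 : ∀ ω i, 0 ≤ v ω i)
    (hmeas : ∀ i, AEStronglyMeasurable (fun ω => v ω i) μ) (ha : ∀ i, a i = 0 ∨ 0 < ⟪a i, u⟫_ℝ)
    (hM : (Matrix.of fun i j => ∫ ω, (v ω i - 1) * (v ω j - 1) ∂μ).IsHermitian) :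
    ∫ ω, ‖∑ i, (v ω i - 1) • a i‖ ^ 2 ∂μ ≤ (⨆ i, hM.eigenvalues i) * ∑ i, ‖a i‖ ^ 2 := by
  by_cases hint : Integrable (fun ω => ‖∑ i, (v ω i - 1) • a i‖ ^ 2) μ
  · have hsum : MemLp (fun ω => ∑ i, (v ω i - 1) • a i) 2 μ :=
      (memLp_two_iff_integrable_sq_norm (by fun_prop)).2 hint
    rw [integral_norm_sum_smul_sq _ a (memLp_sub_one_smul_of_memLp_sum hv0 hmeas ha hsum)]
    exact hM.sum_mul_inner_le a
  · -- the integral is then the junk value `0`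
    rw [integral_undef hint]
    have := iSup_eigenvalues_nonneg_of_second_moment hM
    positivity

end Integrals

theorem smul_sum_sub_smul_sum_sub {ι M : Type*} [Fintype ι] [AddCommGroup M] [Module ℝ M]
    (c : ℝ) (v : ι → ℝ) (x y : ι → M) :
    (c • ∑ i, v i • x i - c • ∑ i, v i • y i) - (c • ∑ i, x i - c • ∑ i, y i)
      = c • ∑ i, (v i - 1) • (x i - y i) := by
  simp only [smul_sub, sub_smul, one_smul, Finset.sum_sub_distrib]
  abel

theorem expected_residual_constant {Ω : Type*} [MeasureSpace Ω]
    [IsProbabilityMeasure (volume : Measure Ω)] (d n : ℕ) (hn : 1 ≤ n)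
    (f : Fin n → EuclideanSpace ℝ (Fin d) → ℝ)
    (g : Fin n → EuclideanSpace ℝ (Fin d) → EuclideanSpace ℝ (Fin d))
    (L : Fin n → ℝ)
    (v : Ω → Fin n → ℝ)
    (hv1 : ∀ i, (∫ ω, v ω i) = 1) (hv0 : ∀ ω i, 0 ≤ v ω i)
    (hconv : ∀ i x y, f i y ≥ f i x + ⟪g i x, y - x⟫_ℝ)
    (hsmooth : ∀ i x y, f i x ≤ f i y + ⟪g i y, x - y⟫_ℝ + L i / 2 * ‖x - y‖ ^ 2)
    (xs : EuclideanSpace ℝ (Fin d))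
    (hmin : ∀ y, (1 / n : ℝ) * ∑ i, f i xs ≤ (1 / n : ℝ) * ∑ i, f i y)
    (hM : (Matrix.of fun i j : Fin n =>
      ∫ ω, (v ω i - 1) * (v ω j - 1)).IsHermitian) :
    ∀ w, (∫ ω, ‖((n : ℝ)⁻¹ • ∑ i, v ω i • g i w - (n : ℝ)⁻¹ • ∑ i, v ω i • g i xs)
            - ((n : ℝ)⁻¹ • ∑ i, g i w - (n : ℝ)⁻¹ • ∑ i, g i xs)‖ ^ 2)
      ≤ 2 * ((⨆ i, hM.eigenvalues i) / n)
          * (Finset.univ.sup' (Finset.univ_nonempty_iff.mpr (Fin.pos_iff_nonempty.mp hn)) L)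
          * ((1 / n : ℝ) * ∑ i, f i w - (1 / n : ℝ) * ∑ i, f i xs) := by
  intro w
  rcases subsingleton_or_nontrivial (EuclideanSpace ℝ (Fin d)) with _ | _
  · simp [Subsingleton.elim w xs]
  have hL i : 0 ≤ L i := smoothness_constant_nonneg (hconv i) (hsmooth i)
  have hgrad : ∑ i, g i xs = 0 :=
    sum_eq_zero_of_forall_sum_le hsmooth fun y => le_of_mul_le_mul_left (hmin y) (by positivity)
  have hmeas i : AEStronglyMeasurable (fun ω => v ω i) :=
    (Integrable.of_integral_ne_zero (by simp [hv1 i])).aestronglyMeasurable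
  have : Nonempty (Fin n) := Fin.pos_iff_nonempty.mp hn
  have hvar := integral_norm_sum_sub_one_smul_sq_le hv0 hmeas
    (fun i => sub_eq_zero_or_inner_pos (hconv i) (hsmooth i) (hL i) w xs) hM
  have hcoco := sum_sq_norm_sub_le_of_sum_eq_zero hconv hsmooth hL
    (Lmax := Finset.univ.sup' Finset.univ_nonempty L)
    (fun i => Finset.le_sup' L (Finset.mem_univ i)) (x := w) hgrad
  simp_rw [smul_sum_sub_smul_sum_sub, norm_smul, mul_pow, integral_const_mul, norm_inv,
    RCLike.norm_natCast]
  refine (mul_le_mul_of_nonneg_left (hvar.trans (mul_le_mul_of_nonneg_left hcoco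
    (iSup_eigenvalues_nonneg_of_second_moment hM)))
    (by positivity)).trans_eq ?_
  field_simp
end

section
/- Let p ∈ (0,1], q = 1−p, and define the step-size sequence α_{k} with α_0 = α and E[α_k] = ((q^{(3k+2)/2}(1−√q) + p)/(1 − q^{3/2}))·α. Then E[α_k] ≥ (2/3)·α for all k ≥ 0, i.e., (q^{(3k+2)/2}(1−√q) + 1 − q)/(1 − q^{3/2}) ≥ 2/3 for all q ∈ [0,1) and k ≥ 0. -/
theorem two_thirds_mul_one_sub_cube_le_one_sub_sq {s : ℝ} (hs : -1 ≤ 2 * s) :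
    2 / 3 * (1 - s ^ 3) ≤ 1 - s ^ 2 := by
  have hfactor : 1 - s ^ 2 - 2 / 3 * (1 - s ^ 3) = (1 - s) ^ 2 * (1 + 2 * s) / 3 := by ring
  have hnonneg : 0 ≤ (1 - s) ^ 2 * (1 + 2 * s) := mul_nonneg (sq_nonneg _) (by linarith)
  linarith

-- In terms of `s = √q` the extra term `s ^ (3k+2) * (1 - s)` is nonnegative, so the bound reduces to
-- `(2/3)(1 - s³) ≤ 1 - s²`, independently of `k`.
theorem step_size_lower_bound (q : ℝ) (hq0 : 0 ≤ q) (hq1 : q < 1) (k : ℕ) :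
    q ^ ((3 * (k : ℝ) + 2) / 2) * (1 - Real.sqrt q) + 1 - q
      ≥ (2 / 3) * (1 - q ^ ((3 : ℝ) / 2)) := by
  rw [Real.rpow_div_two_eq_sqrt _ hq0, Real.rpow_div_two_eq_sqrt _ hq0, Real.rpow_ofNat]
  have hs1 : Real.sqrt q ≤ 1 := Real.sqrt_le_one.mpr hq1.le
  have hterm : 0 ≤ Real.sqrt q ^ (3 * (k : ℝ) + 2) * (1 - Real.sqrt q) :=
    mul_nonneg (Real.rpow_nonneg (Real.sqrt_nonneg q) _) (sub_nonneg.mpr hs1)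
  have hmain := two_thirds_mul_one_sub_cube_le_one_sub_sq
    (by linarith [Real.sqrt_nonneg q] : -1 ≤ 2 * Real.sqrt q)
  rw [Real.sq_sqrt hq0] at hmain
  linarith
end

section
/- Define ζ_p = (7−4p)(1−(1−p)^{3/2})/(p(2−p)(3−2p)) for p ∈ (0,1]. Then 7/4 ≤ ζ_p ≤ 3 for all p ∈ (0,1]. -/
/-!
Substituting `s = √(1 - p) ∈ [0, 1)` gives `p = (1 - s)(1 + s)` and
`1 - (1 - p)^{3/2} = (1 - s)(1 + s + s²)`, so the common factor `1 - s` cancels and `ζ_p = num / den`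
is a rational function of `s` with positive denominator. Clearing it,
`4 · num - 7 · den = (1 - s)(5 + 10s + 17s² + 12s³ + 14s⁴)` and
`3 · den - num = s²(2 + 5s + 2s² + 6s³)`, both visibly nonnegative for `0 ≤ s ≤ 1`.
-/

open Real

noncomputable def zetaSqrt (s : ℝ) : ℝ :=
  (3 + 4 * s ^ 2) * (1 + s + s ^ 2) / ((1 + s) * (1 + s ^ 2) * (1 + 2 * s ^ 2))

theorem zeta_eq_zetaSqrt {p : ℝ} (hp0 : 0 < p) (hp1 : p ≤ 1) :
    (7 - 4 * p) * (1 - (1 - p) ^ ((3 : ℝ) / 2)) / (p * (2 - p) * (3 - 2 * p)) =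
      zetaSqrt √(1 - p) := by
  have hq : 0 ≤ 1 - p := by linarith
  have hpow : (1 - p) ^ ((3 : ℝ) / 2) = √(1 - p) ^ 3 := by
    rw [rpow_div_two_eq_sqrt _ hq]
    exact_mod_cast rpow_natCast _ 3
  have hsq : √(1 - p) ^ 2 = 1 - p := sq_sqrt hq
  have hs0 : 0 ≤ √(1 - p) := sqrt_nonneg _
  rw [hpow, zetaSqrt]
  generalize √(1 - p) = s at hs0 hsq ⊢
  obtain rfl : p = 1 - s ^ 2 := by linarith
  have hden : (1 - s ^ 2) * (2 - (1 - s ^ 2)) * (3 - 2 * (1 - s ^ 2)) ≠ 0 := by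
    have h2 : 0 < 2 - (1 - s ^ 2) := by linarith [sq_nonneg s]
    have h3 : 0 < 3 - 2 * (1 - s ^ 2) := by linarith [sq_nonneg s]
    exact (mul_pos (mul_pos hp0 h2) h3).ne'
  rw [div_eq_div_iff hden (by positivity)]
  ring

theorem seven_fourths_le_zetaSqrt {s : ℝ} (hs0 : 0 ≤ s) (hs1 : s ≤ 1) : 7 / 4 ≤ zetaSqrt s := by
  rw [zetaSqrt, le_div_iff₀ (by positivity)]
  have : 0 ≤ (1 - s) * (5 + 10 * s + 17 * s ^ 2 + 12 * s ^ 3 + 14 * s ^ 4) :=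
    mul_nonneg (by linarith) (by positivity)
  linear_combination this / 4

theorem zetaSqrt_le_three {s : ℝ} (hs0 : 0 ≤ s) : zetaSqrt s ≤ 3 := by
  rw [zetaSqrt, div_le_iff₀ (by positivity)]
  have : 0 ≤ s ^ 2 * (2 + 5 * s + 2 * s ^ 2 + 6 * s ^ 3) := by positivity
  linear_combination this

theorem zeta_bounds (p : ℝ) (hp0 : 0 < p) (hp1 : p ≤ 1) :
    7 / 4 ≤ (7 - 4 * p) * (1 - (1 - p) ^ ((3 : ℝ) / 2)) / (p * (2 - p) * (3 - 2 * p)) ∧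
    (7 - 4 * p) * (1 - (1 - p) ^ ((3 : ℝ) / 2)) / (p * (2 - p) * (3 - 2 * p)) ≤ 3 := by
  rw [zeta_eq_zetaSqrt hp0 hp1]
  have hs0 : 0 ≤ √(1 - p) := sqrt_nonneg _
  exact ⟨seven_fourths_le_zetaSqrt hs0 (sqrt_le_one.mpr (by linarith)),
    zetaSqrt_le_three hs0⟩
end
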